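/- Let d ≥ 2 be an integer, n : ℕ, and p ∈ [0,1]. For every PPT POVM element E on the n-copy space, the (real) error probability satisfies Re(p · Tr(E · σ_d^{⊗n}) + (1−p) · Tr((1 − E) · α_d^{⊗n})) ≥ min(p · ((d−1)/(d+1))^n, 1−p). -/

import Mathlib

open Matrix Finset
open scoped BigOperators Kronecker ComplexOrder

noncomputable section

/-- The flip (swap) operator on `ℂ^d ⊗ ℂ^d`. -/
def Flip (d : ℕ) : Matrix (Fin d × Fin d) (Fin d × Fin d) ℂ :=
  Matrix.of fun p q => if p.1 = q.2 ∧ p.2 = q.1 then 1 else 0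

/-- Projection onto the symmetric subspace, `Π_s = (1 + F)/2`. -/
def projSym (d : ℕ) : Matrix (Fin d × Fin d) (Fin d × Fin d) ℂ :=
  (2 : ℂ)⁻¹ • (1 + Flip d)

/-- Projection onto the antisymmetric subspace, `Π_a = (1 - F)/2`. -/
def projAsym (d : ℕ) : Matrix (Fin d × Fin d) (Fin d × Fin d) ℂ :=
  (2 : ℂ)⁻¹ • (1 - Flip d)

/-- The symmetric Werner state `σ_d = (2/(d(d+1))) • Π_s`. -/
def wernerSym (d : ℕ) : Matrix (Fin d × Fin d) (Fin d × Fin d) ℂ :=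
  (2 / ((d : ℂ) * ((d : ℂ) + 1))) • projSym d

/-- The antisymmetric Werner state `α_d = (2/(d(d-1))) • Π_a`. -/
def wernerAsym (d : ℕ) : Matrix (Fin d × Fin d) (Fin d × Fin d) ℂ :=
  (2 / ((d : ℂ) * ((d : ℂ) - 1))) • projAsym d

/-- The POVM element `G_d`: diagonal, with `(i,j),(i,j)` entry `1` iff `i ≠ j`. -/
def Gmat (d : ℕ) : Matrix (Fin d × Fin d) (Fin d × Fin d) ℂ :=
  Matrix.diagonal fun p => if p.1 ≠ p.2 then 1 else 0

/-- `n`-fold tensor power of a matrix on `ℂ^d ⊗ ℂ^d`. -/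
def tpow {d : ℕ} (n : ℕ) (X : Matrix (Fin d × Fin d) (Fin d × Fin d) ℂ) :
    Matrix (Fin n → Fin d × Fin d) (Fin n → Fin d × Fin d) ℂ :=
  Matrix.of fun f g => ∏ m, X (f m) (g m)

/-- The twirled single-copy POVM element `M_d = ((d-1)/(d+1)) • Π_s + Π_a`. -/
def MdMat (d : ℕ) : Matrix (Fin d × Fin d) (Fin d × Fin d) ℂ :=
  (((d : ℂ) - 1) / ((d : ℂ) + 1)) • projSym d + projAsym d

/-- `A_k`: sum over all `k`-element subsets `S` of the copies of the tensor product with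
`Π_a` on copies in `S` and `Π_s` elsewhere. -/
def Amat (d n k : ℕ) : Matrix (Fin n → Fin d × Fin d) (Fin n → Fin d × Fin d) ℂ :=
  ∑ S ∈ Finset.powersetCard k (Finset.univ : Finset (Fin n)),
    Matrix.of fun f g => ∏ m, (if m ∈ S then projAsym d else projSym d) (f m) (g m)

/-- Partial transpose on `ℂ^d ⊗ ℂ^d`. -/
def pt {d : ℕ} (X : Matrix (Fin d × Fin d) (Fin d × Fin d) ℂ) :
    Matrix (Fin d × Fin d) (Fin d × Fin d) ℂ :=
  Matrix.of fun p q => X (p.1, q.2) (q.1, p.2)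

/-- The maximally entangled state `Φ_d`. -/
def Phi (d : ℕ) : Matrix (Fin d × Fin d) (Fin d × Fin d) ℂ :=
  Matrix.of fun p q => if p.1 = p.2 ∧ q.1 = q.2 then ((d : ℂ))⁻¹ else 0

/-- `n`-copy partial transpose. -/
def ptN {d n : ℕ} (Y : Matrix (Fin n → Fin d × Fin d) (Fin n → Fin d × Fin d) ℂ) :
    Matrix (Fin n → Fin d × Fin d) (Fin n → Fin d × Fin d) ℂ :=
  Matrix.of fun f g => Y (fun m => ((f m).1, (g m).2)) (fun m => ((g m).1, (f m).2))

/-- `T_l`: sum over all `l`-element subsets `S` of the copies of the tensor product with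
`Φ_d` on copies in `S` and `1 - Φ_d` elsewhere. -/
def Tmat (d n l : ℕ) : Matrix (Fin n → Fin d × Fin d) (Fin n → Fin d × Fin d) ℂ :=
  ∑ S ∈ Finset.powersetCard l (Finset.univ : Finset (Fin n)),
    Matrix.of fun f g => ∏ m, (if m ∈ S then Phi d else (1 - Phi d)) (f m) (g m)

/-- The matrix `Q` of the linear program: `Q l k = Σ_{j=0}^{min(l,k)}
(n−l choose k−j)(l choose j)(1−d)^j (1+d)^{l−j}`. -/
def Qmat (n : ℕ) (d : ℝ) (l k : ℕ) : ℝ :=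
  ∑ j ∈ Finset.range (min l k + 1),
    ((n - l).choose (k - j) : ℝ) * (l.choose j : ℝ) * (1 - d) ^ j * (1 + d) ^ (l - j)

/-- A PPT POVM element on the `n`-copy space: `E`, `1 - E`, `E^Γ`, `(1-E)^Γ` all PSD. -/
def IsPPTPovmElem {d n : ℕ}
    (E : Matrix (Fin n → Fin d × Fin d) (Fin n → Fin d × Fin d) ℂ) : Prop :=
  E.PosSemidef ∧ (1 - E).PosSemidef ∧ (ptN E).PosSemidef ∧ (ptN (1 - E)).PosSemidef

/-- Error probability for discriminating `σ_d^{⊗n}` (prior `p`) from `α_d^{⊗n}`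
(prior `1-p`) with the two-outcome POVM `{E, 1 - E}`. -/
def errProb (d n : ℕ) (p : ℝ)
    (E : Matrix (Fin n → Fin d × Fin d) (Fin n → Fin d × Fin d) ℂ) : ℝ :=
  ((p : ℂ) * (E * tpow n (wernerSym d)).trace
    + (1 - (p : ℂ)) * ((1 - E) * tpow n (wernerAsym d)).trace).re

/-- Separability of a bipartite matrix. -/
def IsSep {I J : Type*} [Fintype I] [Fintype J]
    (W : Matrix (I × J) (I × J) ℂ) : Prop :=
  ∃ (m : ℕ) (A : Fin m → Matrix I I ℂ) (B : Fin m → Matrix J J ℂ),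
    (∀ i, (A i).PosSemidef) ∧ (∀ i, (B i).PosSemidef) ∧ W = ∑ i, A i ⊗ₖ B i

/-- Trace norm `‖X‖₁ = Tr √(Xᴴ X)`. -/
def traceNorm {ι : Type*} [Fintype ι] [DecidableEq ι] (X : Matrix ι ι ℂ) : ℝ :=
  ((Matrix.posSemidef_conjTranspose_mul_self X).1.eigenvectorUnitary.1 *
      Matrix.diagonal (((↑) : ℝ → ℂ) ∘ Real.sqrt ∘ (Matrix.posSemidef_conjTranspose_mul_self X).1.eigenvalues) *
      (star (Matrix.posSemidef_conjTranspose_mul_self X).1.eigenvectorUnitary : Matrix ι ι ℂ)).trace.re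

/-- Frobenius (Hilbert–Schmidt) norm `‖X‖₂ = √(Tr (Xᴴ X))`. -/
def frobNorm {ι : Type*} [Fintype ι] (X : Matrix ι ι ℂ) : ℝ :=
  Real.sqrt ((Xᴴ * X).trace.re)

/-! Let `c = min (p ((d - 1)/(d + 1))^n) (1 - p)`. Under the partial transpose, `σ_d` and `α_d`
become combinations of the projectors `Φ_d` and `1 - Φ_d`, with weights `(1/d, 1/(d(d+1)))` and
`(-1/d, 1/(d(d-1)))`. Expanding the tensor powers over the sets of copies carrying `Φ_d` shows
that `Y = p σ_d^{⊗n} - c α_d^{⊗n}` has positive semidefinite partial transpose, so for a PPT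
`E` we get `Tr (E Y) = Tr (E^Γ Y^Γ) ≥ 0`. Then the error probability is at least
`c Tr (E α_d^{⊗n}) + c Tr ((1 - E) α_d^{⊗n}) = c`. -/

section PiKronecker

variable {κ ι R : Type*} [Fintype κ]

def piKronecker [CommMonoid R] (M : κ → Matrix ι ι R) : Matrix (κ → ι) (κ → ι) R :=
  Matrix.of fun f g => ∏ m, M m (f m) (g m)

lemma tpow_eq_piKronecker {d n : ℕ} (X : Matrix (Fin d × Fin d) (Fin d × Fin d) ℂ) :
    tpow n X = piKronecker fun _ => X := rfl

lemma conjTranspose_piKronecker [CommSemiring R] [StarRing R] (M : κ → Matrix ι ι R) :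
    (piKronecker M)ᴴ = piKronecker fun m => (M m)ᴴ := by
  ext f g
  simp [piKronecker, star_prod]

lemma piKronecker_smul_add_smul [CommSemiring R] [DecidableEq κ] (a b : R)
    (P Q : Matrix ι ι R) :
    piKronecker (fun _ : κ => a • P + b • Q) =
      ∑ S : Finset κ,
        (a ^ #S * b ^ #Sᶜ) • piKronecker fun m => if m ∈ S then P else Q := by
  ext f g
  simp only [piKronecker, of_apply, Matrix.add_apply, Matrix.smul_apply, smul_eq_mul,
    Matrix.sum_apply, Fintype.prod_add]
  refine Fintype.sum_congr _ _ fun S => ?_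
  have hsplit : ∏ m, (if m ∈ S then P else Q) (f m) (g m) =
      (∏ m ∈ S, P (f m) (g m)) * ∏ m ∈ Sᶜ, Q (f m) (g m) := by
    rw [← prod_mul_prod_compl S]
    congr 1 <;> refine prod_congr rfl fun m hm => ?_ <;> simp_all
  rw [hsplit, prod_mul_distrib, prod_mul_distrib, prod_const, prod_const]
  ring

variable [Fintype ι]

lemma piKronecker_mul [CommSemiring R] [DecidableEq κ] (A B : κ → Matrix ι ι R) :
    piKronecker A * piKronecker B = piKronecker fun m => A m * B m := by
  ext f g
  simp only [piKronecker, mul_apply, of_apply, ← prod_mul_distrib]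
  exact (Fintype.prod_sum fun m k => A m (f m) k * B m k (g m)).symm

lemma trace_piKronecker [CommSemiring R] [DecidableEq κ] (M : κ → Matrix ι ι R) :
    (piKronecker M).trace = ∏ m, (M m).trace := by
  simp only [trace, Matrix.diag, piKronecker, of_apply]
  exact (Fintype.prod_sum fun m i => M m i i).symm

lemma posSemidef_piKronecker {𝕜 : Type*} [RCLike 𝕜] [DecidableEq ι] [DecidableEq κ]
    {M : κ → Matrix ι ι 𝕜} (hM : ∀ m, (M m).PosSemidef) : (piKronecker M).PosSemidef := by
  open scoped MatrixOrder in
  have hsqrt : piKronecker M = (piKronecker fun m => CFC.sqrt (M m))ᴴ *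
      piKronecker fun m => CFC.sqrt (M m) := by
    rw [conjTranspose_piKronecker, piKronecker_mul]
    congr! 2 with m
    rw [(CFC.sqrt_nonneg (M m)).posSemidef.isHermitian.eq, CFC.sqrt_mul_sqrt_self _ (hM m).nonneg]
  exact hsqrt ▸ posSemidef_conjTranspose_mul_self _

end PiKronecker

lemma Matrix.PosSemidef.trace_mul_nonneg {𝕜 n : Type*} [RCLike 𝕜] [Fintype n] [DecidableEq n]
    {A B : Matrix n n 𝕜} (hA : A.PosSemidef) (hB : B.PosSemidef) : 0 ≤ (A * B).trace := by
  open scoped MatrixOrder in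
  have hSBS := (hB.mul_mul_conjTranspose_same (CFC.sqrt A)).trace_nonneg
  rwa [(CFC.sqrt_nonneg A).posSemidef.isHermitian.eq, Matrix.mul_assoc, trace_mul_comm,
    Matrix.mul_assoc, CFC.sqrt_mul_sqrt_self A hA.nonneg, trace_mul_comm] at hSBS

lemma Matrix.IsHermitian.posSemidef_of_mul_self_eq {R n : Type*} [CommRing R] [PartialOrder R]
    [StarRing R] [StarOrderedRing R] [Fintype n] {A : Matrix n n R} (hA : A.IsHermitian)
    (hAA : A * A = A) : A.PosSemidef := by
  simpa [hA.eq, hAA] using posSemidef_conjTranspose_mul_self A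

section PartialTranspose

variable {d n : ℕ}

lemma ptN_tpow (X : Matrix (Fin d × Fin d) (Fin d × Fin d) ℂ) :
    ptN (tpow n X) = tpow n (pt X) := rfl

lemma ptN_sub (X Y : Matrix (Fin n → Fin d × Fin d) (Fin n → Fin d × Fin d) ℂ) :
    ptN (X - Y) = ptN X - ptN Y := rfl

lemma ptN_smul (c : ℂ) (X : Matrix (Fin n → Fin d × Fin d) (Fin n → Fin d × Fin d) ℂ) :
    ptN (c • X) = c • ptN X := rfl

lemma trace_ptN_mul_ptN (X Y : Matrix (Fin n → Fin d × Fin d) (Fin n → Fin d × Fin d) ℂ) :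
    (ptN X * ptN Y).trace = (X * Y).trace := by
  simp only [trace, Matrix.diag, mul_apply, ← Fintype.sum_prod_type']
  let swap : (Fin n → Fin d × Fin d) × (Fin n → Fin d × Fin d) → _ := fun fg =>
    (fun m => ((fg.1 m).1, (fg.2 m).2), fun m => ((fg.2 m).1, (fg.1 m).2))
  have hswap : Function.Involutive swap := fun _ => rfl
  exact Fintype.sum_equiv hswap.toPerm _ _ fun _ => rfl

end PartialTranspose

section Werner

variable {d : ℕ}

lemma isHermitian_Flip : (Flip d).IsHermitian := by
  ext p q
  simp only [conjTranspose_apply, Flip, of_apply]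
  split_ifs <;> simp_all

lemma Flip_mul_Flip : Flip d * Flip d = 1 := by
  ext ⟨i, j⟩ ⟨k, l⟩
  simp [Flip, mul_apply, one_apply, Fintype.sum_prod_type, ite_and]

lemma trace_Flip : (Flip d).trace = d := by
  simp [Flip, trace, Fintype.sum_prod_type, ite_and]

lemma isHermitian_projAsym : (projAsym d).IsHermitian := by
  simp [projAsym, IsHermitian, conjTranspose_smul, conjTranspose_sub, isHermitian_Flip.eq]

lemma projAsym_mul_projAsym : projAsym d * projAsym d = projAsym d := by
  simp only [projAsym, smul_mul_smul, sub_mul, mul_sub, Flip_mul_Flip, one_mul, mul_one]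
  module

lemma posSemidef_wernerAsym : (wernerAsym d).PosSemidef := by
  have hc : (0 : ℝ) ≤ 2 / (d * (d - 1)) := by
    rcases Nat.eq_zero_or_pos d with rfl | hd
    · simp
    · have : (1 : ℝ) ≤ d := Nat.one_le_cast.2 hd
      positivity
  refine (isHermitian_projAsym.posSemidef_of_mul_self_eq projAsym_mul_projAsym).smul ?_
  convert Complex.zero_le_real.2 hc
  push_cast
  rfl

lemma trace_wernerAsym (hd : 1 < d) : (wernerAsym d).trace = 1 := by
  have hd1 : (d : ℂ) - 1 ≠ 0 := sub_ne_zero.2 (by exact_mod_cast hd.ne')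
  have hd0 : (d : ℂ) ≠ 0 := by exact_mod_cast (by omega : d ≠ 0)
  simp only [wernerAsym, projAsym, trace_smul, trace_sub, trace_one, trace_Flip, smul_eq_mul,
    Fintype.card_prod, Fintype.card_fin]
  field_simp
  push_cast
  ring

lemma isHermitian_Phi : (Phi d).IsHermitian := by
  ext p q
  simp only [conjTranspose_apply, Phi, of_apply]
  split_ifs <;> simp_all

lemma Phi_mul_Phi (hd : d ≠ 0) : Phi d * Phi d = Phi d := by
  ext ⟨i, j⟩ ⟨k, l⟩
  have hd0 : (d : ℂ) ≠ 0 := by exact_mod_cast hd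
  simp [Phi, mul_apply, Fintype.sum_prod_type, ite_and]
  split_ifs <;> field_simp

lemma posSemidef_Phi (hd : d ≠ 0) : (Phi d).PosSemidef :=
  isHermitian_Phi.posSemidef_of_mul_self_eq (Phi_mul_Phi hd)

lemma posSemidef_one_sub_Phi (hd : d ≠ 0) : (1 - Phi d).PosSemidef := by
  refine (isHermitian_one.sub isHermitian_Phi).posSemidef_of_mul_self_eq ?_
  simp [sub_mul, mul_sub, Phi_mul_Phi hd]

lemma pt_wernerSym (hd : d ≠ 0) :
    pt (wernerSym d) = (d : ℂ)⁻¹ • Phi d + ((d : ℂ) * (d + 1))⁻¹ • (1 - Phi d) := by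
  have hd0 : (d : ℂ) ≠ 0 := by exact_mod_cast hd
  have hd1 : (d : ℂ) + 1 ≠ 0 := by exact_mod_cast d.succ_ne_zero
  ext ⟨i, j⟩ ⟨k, l⟩
  simp [pt, wernerSym, projSym, Flip, Phi, one_apply, eq_comm (a := l)]
  split_ifs <;> field_simp <;> ring

lemma pt_wernerAsym (hd : 1 < d) :
    pt (wernerAsym d) =
      (-(d : ℂ)⁻¹) • Phi d + ((d : ℂ) * (d - 1))⁻¹ • (1 - Phi d) := by
  have hd1 : (d : ℂ) - 1 ≠ 0 := sub_ne_zero.2 (by exact_mod_cast hd.ne')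
  have hd0 : (d : ℂ) ≠ 0 := by exact_mod_cast (by omega : d ≠ 0)
  ext ⟨i, j⟩ ⟨k, l⟩
  simp [pt, wernerAsym, projAsym, Flip, Phi, one_apply, eq_comm (a := l)]
  split_ifs <;> field_simp <;> ring

end Werner

lemma werner_weight_le {x p c : ℝ} (hx : 1 < x) (hp : 0 ≤ p) (hc0 : 0 ≤ c) {k j : ℕ}
    (hc : c ≤ p * ((x - 1) / (x + 1)) ^ (k + j)) :
    c * (-x⁻¹) ^ k * (x * (x - 1))⁻¹ ^ j ≤ p * x⁻¹ ^ k * (x * (x + 1))⁻¹ ^ j := by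
  have hx0 : 0 < x := by linarith
  have hr0 : 0 ≤ (x - 1) / (x + 1) := div_nonneg (by linarith) (by linarith)
  have hr1 : (x - 1) / (x + 1) ≤ 1 := (div_le_one (by linarith)).2 (by linarith)
  have hneg : (-x⁻¹) ^ k ≤ x⁻¹ ^ k := by
    simpa [abs_pow, abs_of_pos hx0] using le_abs_self ((-x⁻¹) ^ k)
  have hxx : 0 ≤ x * (x - 1) := mul_nonneg hx0.le (by linarith)
  have hscale : (x - 1) / (x + 1) * (x * (x - 1))⁻¹ = (x * (x + 1))⁻¹ := by
    have : x - 1 ≠ 0 := by linarith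
    field_simp
  calc c * (-x⁻¹) ^ k * (x * (x - 1))⁻¹ ^ j
      ≤ c * x⁻¹ ^ k * (x * (x - 1))⁻¹ ^ j := by gcongr
    _ ≤ p * ((x - 1) / (x + 1)) ^ (k + j) * x⁻¹ ^ k * (x * (x - 1))⁻¹ ^ j := by gcongr
    _ ≤ p * ((x - 1) / (x + 1)) ^ j * x⁻¹ ^ k * (x * (x - 1))⁻¹ ^ j := by
        gcongr p * ?_ * _ * _
        exact pow_le_pow_of_le_one hr0 hr1 (Nat.le_add_left j k)
    _ = p * x⁻¹ ^ k * (x * (x + 1))⁻¹ ^ j := by rw [← hscale, mul_pow]; ring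

lemma posSemidef_ptN_smul_wernerSym_sub_smul_wernerAsym {d n : ℕ} (hd : 1 < d) {p c : ℝ}
    (hp : 0 ≤ p) (hc0 : 0 ≤ c) (hc : c ≤ p * (((d : ℝ) - 1) / ((d : ℝ) + 1)) ^ n) :
    PosSemidef
      (ptN ((p : ℂ) • tpow n (wernerSym d) - (c : ℂ) • tpow n (wernerAsym d))) := by
  rw [ptN_sub, ptN_smul, ptN_smul, ptN_tpow, ptN_tpow, pt_wernerSym (by omega), pt_wernerAsym hd,
    tpow_eq_piKronecker, tpow_eq_piKronecker, piKronecker_smul_add_smul,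
    piKronecker_smul_add_smul, smul_sum, smul_sum, ← sum_sub_distrib]
  refine posSemidef_sum _ fun S _ => ?_
  rw [smul_smul, smul_smul, ← sub_smul]
  refine (posSemidef_piKronecker fun m => ?_).smul ?_
  · split_ifs
    exacts [posSemidef_Phi (by omega), posSemidef_one_sub_Phi (by omega)]
  · have hcoeff := werner_weight_le (by exact_mod_cast hd : (1 : ℝ) < d) hp hc0
      (k := #S) (j := #Sᶜ) (by rwa [card_add_card_compl, Fintype.card_fin])
    convert Complex.zero_le_real.2 (sub_nonneg.2 hcoeff) using 1
    push_cast
    ring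

/-- lower bound on the error probability of any PPT POVM element. -/
theorem ppt_error_lower_bound (d : ℕ) (hd : 2 ≤ d) (n : ℕ) (p : ℝ)
    (hp0 : 0 ≤ p) (hp1 : p ≤ 1)
    (E : Matrix (Fin n → Fin d × Fin d) (Fin n → Fin d × Fin d) ℂ)
    (hE : IsPPTPovmElem E) :
    ((p : ℂ) * (E * tpow n (wernerSym d)).trace
        + (1 - (p : ℂ)) * ((1 - E) * tpow n (wernerAsym d)).trace).re
      ≥ min (p * (((d : ℝ) - 1) / ((d : ℝ) + 1)) ^ n) (1 - p) := by
  set c := min (p * (((d : ℝ) - 1) / ((d : ℝ) + 1)) ^ n) (1 - p)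
  have hc0 : 0 ≤ c := by
    have hd' : (2 : ℝ) ≤ d := by exact_mod_cast hd
    exact le_min (mul_nonneg hp0 (pow_nonneg (div_nonneg (by linarith) (by linarith)) n))
      (by linarith)
  set Y := (p : ℂ) • tpow n (wernerSym d) - (c : ℂ) • tpow n (wernerAsym d)
  obtain ⟨-, hE₁, hEΓ, -⟩ := hE
  have hEY : 0 ≤ (E * Y).trace := trace_ptN_mul_ptN E Y ▸ hEΓ.trace_mul_nonneg
    (posSemidef_ptN_smul_wernerSym_sub_smul_wernerAsym hd hp0 hc0 (min_le_left _ _))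
  have hEα : 0 ≤ ((1 - E) * tpow n (wernerAsym d)).trace :=
    hE₁.trace_mul_nonneg (posSemidef_piKronecker fun _ => posSemidef_wernerAsym)
  have htrα : (tpow n (wernerAsym d)).trace = 1 := by
    rw [tpow_eq_piKronecker, trace_piKronecker, trace_wernerAsym hd, prod_const_one]
  have hsplit : (p : ℂ) * (E * tpow n (wernerSym d)).trace
      + (1 - (p : ℂ)) * ((1 - E) * tpow n (wernerAsym d)).trace =
      c + ((E * Y).trace
        + ((1 - p - c : ℝ) : ℂ) * ((1 - E) * tpow n (wernerAsym d)).trace) := by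
    simp only [Y, Matrix.mul_sub, Matrix.sub_mul, trace_sub, Matrix.mul_smul, trace_smul,
      Matrix.one_mul, htrα, smul_eq_mul]
    push_cast
    ring
  have hc1 : 0 ≤ 1 - p - c := sub_nonneg.2 (min_le_right _ _)
  have hrest : 0 ≤ (E * Y).trace
      + ((1 - p - c : ℝ) : ℂ) * ((1 - E) * tpow n (wernerAsym d)).trace :=
    add_nonneg hEY (mul_nonneg (Complex.zero_le_real.2 hc1) hEα)
  rw [ge_iff_le, hsplit, Complex.add_re, Complex.ofReal_re]
  linarith [(Complex.nonneg_iff.1 hrest).1]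

end
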